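/- arXiv:1008.5349 — 8 statements merged into one kernel-verified Lean document; each statement's English description precedes it below -/
import Mathlib

section
/- For every integer N ≥ 2, the ground state energy satisfies 0 ≥ E₀(N) − (N/2)·v̂(0) ≥ −(N/(2(N−1)))·(v(0) − v̂(0)). -/
open MeasureTheory Real

noncomputable section

/-- The unit box `[0,1]^d` in `ℝ^d`. -/
def boxd (d : ℕ) : Set (Fin d → ℝ) := Set.univ.pi fun _ => Set.Icc (0 : ℝ) 1

/-- The unit box `[0,1]^{dN}` in `(ℝ^d)^N`. -/
def boxN (d N : ℕ) : Set (Fin N → Fin d → ℝ) :=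
  Set.univ.pi fun _ => Set.univ.pi fun _ => Set.Icc (0 : ℝ) 1

/-- `|p|²` for the lattice point `p = 2πk ∈ (2πℤ)^d`. -/
def pSq (d : ℕ) (k : Fin d → ℤ) : ℝ := ∑ j, (2 * π * (k j : ℝ)) ^ 2

/-- `v` is 1-periodic in each coordinate. -/
def PeriodicPot (d : ℕ) (v : (Fin d → ℝ) → ℝ) : Prop :=
  ∀ (x : Fin d → ℝ) (k : Fin d → ℤ), v (fun j => x j + (k j : ℝ)) = v x

/-- `vhat` gives the Fourier coefficients of `v`:
`v̂(p) = ∫_{[0,1]^d} v(x) e^{-ip·x} dx` for `p = 2πk`. -/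
def HasFourierCoeffs (d : ℕ) (v : (Fin d → ℝ) → ℝ) (vhat : (Fin d → ℤ) → ℝ) : Prop :=
  ∀ k : Fin d → ℤ, (vhat k : ℂ) =
    ∫ x in boxd d, (v x : ℂ) * Complex.exp (-Complex.I * ∑ j, (2 * π * (k j : ℝ)) * x j)

/-- `v` equals its Fourier series pointwise. -/
def HasFourierExpansion (d : ℕ) (v : (Fin d → ℝ) → ℝ) (vhat : (Fin d → ℤ) → ℝ) : Prop :=
  ∀ x : Fin d → ℝ, (v x : ℂ) =
    ∑' k : Fin d → ℤ, (vhat k : ℂ) * Complex.exp (Complex.I * ∑ j, (2 * π * (k j : ℝ)) * x j)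

/-- The standing assumptions on the interaction potential `v` with Fourier
coefficients `vhat`: continuous, periodic, even, with nonnegative summable
Fourier coefficients, equal to its Fourier series. -/
structure PotentialAssumptions (d : ℕ) (v : (Fin d → ℝ) → ℝ)
    (vhat : (Fin d → ℤ) → ℝ) : Prop where
  continuous : Continuous v
  periodic : PeriodicPot d v
  even : ∀ x, v (-x) = v x
  coeffs : HasFourierCoeffs d v vhat
  nonneg : ∀ k, 0 ≤ vhat k
  summable : Summable vhat
  expansion : HasFourierExpansion d v vhat

/-- An `N`-particle wave function is 1-periodic in each coordinate. -/
def PeriodicWF (d N : ℕ) (Ψ : (Fin N → Fin d → ℝ) → ℂ) : Prop :=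
  ∀ (x : Fin N → Fin d → ℝ) (k : Fin N → Fin d → ℤ),
    Ψ (fun i j => x i j + (k i j : ℝ)) = Ψ x

/-- An `N`-particle wave function is symmetric under permutation of the particles. -/
def SymmetricWF (d N : ℕ) (Ψ : (Fin N → Fin d → ℝ) → ℂ) : Prop :=
  ∀ (σ : Equiv.Perm (Fin N)) (x : Fin N → Fin d → ℝ), Ψ (fun i => x (σ i)) = Ψ x

/-- `∫_{[0,1]^{dN}} |Ψ|² = 1`. -/
def Normalized (d N : ℕ) (Ψ : (Fin N → Fin d → ℝ) → ℂ) : Prop :=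
  ∫ x in boxN d N, ‖Ψ x‖ ^ 2 = 1

/-- The unit vector in the direction of the `j`-th coordinate of the `i`-th particle. -/
def dir (d N : ℕ) (i : Fin N) (j : Fin d) : Fin N → Fin d → ℝ :=
  Pi.single i (Pi.single j 1)

/-- The kinetic energy `∑_{i=1}^N ∫_{[0,1]^{dN}} |∇_{x_i}Ψ|² dx`. -/
def kineticEnergy (d N : ℕ) (Ψ : (Fin N → Fin d → ℝ) → ℂ) : ℝ :=
  ∑ i : Fin N, ∫ x in boxN d N, ∑ j : Fin d, ‖fderiv ℝ Ψ x (dir d N i j)‖ ^ 2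

/-- The potential energy `(N-1)⁻¹ ∑_{i<j} ∫_{[0,1]^{dN}} v(x_i - x_j)|Ψ|² dx`. -/
def potentialEnergy (d N : ℕ) (v : (Fin d → ℝ) → ℝ) (Ψ : (Fin N → Fin d → ℝ) → ℂ) : ℝ :=
  ((N : ℝ) - 1)⁻¹ * ∑ i : Fin N, ∑ j : Fin N,
    if i < j then ∫ x in boxN d N, v (x i - x j) * ‖Ψ x‖ ^ 2 else 0

/-- The energy form `E_N(Ψ)`. -/
def energyForm (d N : ℕ) (v : (Fin d → ℝ) → ℝ) (Ψ : (Fin N → Fin d → ℝ) → ℂ) : ℝ :=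
  kineticEnergy d N Ψ + potentialEnergy d N v Ψ

/-- The ground state energy `E₀(N)`: the infimum of the energy form over smooth,
periodic, permutation-symmetric, normalized wave functions. -/
def E0 (d N : ℕ) (v : (Fin d → ℝ) → ℝ) : ℝ :=
  sInf {E : ℝ | ∃ Ψ : (Fin N → Fin d → ℝ) → ℂ, ContDiff ℝ (⊤ : ℕ∞) Ψ ∧ PeriodicWF d N Ψ ∧
    SymmetricWF d N Ψ ∧ Normalized d N Ψ ∧ E = energyForm d N v Ψ}

/-- The elementary excitation energy `e_p = √(|p|⁴ + 2|p|²v̂(p))` for `p = 2πk`. -/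
def excitation (d : ℕ) (vhat : (Fin d → ℤ) → ℝ) (k : Fin d → ℤ) : ℝ :=
  Real.sqrt ((pSq d k) ^ 2 + 2 * pSq d k * vhat k)

/-- The Bogoliubov energy `E^Bog = -(1/2)∑_{p≠0}(|p|² + v̂(p) - e_p)`. -/
def Ebog (d : ℕ) (vhat : (Fin d → ℤ) → ℝ) : ℝ :=
  -(1 / 2) * ∑' k : {k : Fin d → ℤ // k ≠ 0},
    (pSq d k.1 + vhat k.1 - excitation d vhat k.1)

namespace Aux

lemma boxd_meas (d : ℕ) : MeasurableSet (boxd d) :=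
  MeasurableSet.univ_pi fun _ => measurableSet_Icc
lemma boxN_meas (d N : ℕ) : MeasurableSet (boxN d N) :=
  MeasurableSet.univ_pi fun _ => boxd_meas d
lemma boxd_vol (d : ℕ) : volume (boxd d) = 1 := by
  rw [boxd, volume_pi_pi]; simp
lemma boxN_vol (d N : ℕ) : volume (boxN d N) = 1 := by
  rw [boxN, volume_pi_pi]
  have : ∀ i : Fin N, volume (Set.univ.pi fun _ : Fin d => Set.Icc (0:ℝ) 1) = 1 :=
    fun _ => boxd_vol d
  rw [Finset.prod_congr rfl fun i _ => this i, Finset.prod_const_one]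
lemma boxd_compact (d : ℕ) : IsCompact (boxd d) :=
  isCompact_univ_pi fun _ => isCompact_Icc
lemma boxN_compact (d N : ℕ) : IsCompact (boxN d N) :=
  isCompact_univ_pi fun _ => boxd_compact d

lemma int1d (m : ℤ) : ∫ t in Set.Icc (0:ℝ) 1, Complex.exp (Complex.I * (2 * π * m) * t)
    = if m = 0 then 1 else 0 := by
  rw [MeasureTheory.integral_Icc_eq_integral_Ioc, ← intervalIntegral.integral_of_le zero_le_one]
  by_cases hm : m = 0
  · simp [hm]
  · have hc : (Complex.I * (2 * π * m)) ≠ 0 := by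
      simp [Complex.ext_iff, Real.pi_ne_zero, hm, Complex.I_ne_zero]
    rw [if_neg hm, integral_exp_mul_complex hc]
    simp only [Complex.ofReal_one, Complex.ofReal_zero, mul_one, mul_zero]
    rw [show Complex.I * (2*π*(m:ℂ)) = (m:ℂ) * (2*π*Complex.I) by ring,
      Complex.exp_int_mul_two_pi_mul_I, Complex.exp_zero, sub_self, zero_div]

def ee (d : ℕ) (k : Fin d → ℤ) (y : Fin d → ℝ) : ℂ :=
  Complex.exp (Complex.I * ∑ j, (2 * π * (k j : ℝ)) * y j)

lemma ee_prod (d : ℕ) (k : Fin d → ℤ) (y : Fin d → ℝ) :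
    ee d k y = ∏ j, Complex.exp (Complex.I * (2 * π * (k j : ℝ)) * y j) := by
  rw [ee, ← Complex.exp_sum]
  congr 1
  push_cast
  rw [Finset.mul_sum]
  exact Finset.sum_congr rfl fun j _ => by ring

lemma ee_zero (d : ℕ) (y : Fin d → ℝ) : ee d 0 y = 1 := by
  simp [ee]

lemma ee_continuous (d : ℕ) (k : Fin d → ℤ) : Continuous (ee d k) := by
  unfold ee
  exact Complex.continuous_exp.comp <| continuous_const.mul <|
    Complex.continuous_ofReal.comp <| continuous_finset_sum _ fun j _ =>
      continuous_const.mul (continuous_apply j)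

lemma ee_norm (d : ℕ) (k : Fin d → ℤ) (y : Fin d → ℝ) : ‖ee d k y‖ = 1 := by
  rw [ee, Complex.norm_exp]
  simp

lemma ee_neg (d : ℕ) (k : Fin d → ℤ) (y : Fin d → ℝ) :
    ee d (-k) y = (starRingEnd ℂ) (ee d k y) := by
  rw [ee, ee, ← Complex.exp_conj]
  congr 1
  simp [Complex.ext_iff]

lemma ee_sub (d : ℕ) (k : Fin d → ℤ) (a b : Fin d → ℝ) :
    ee d k (a - b) = ee d k a * ee d (-k) b := by
  rw [ee, ee, ee, ← Complex.exp_add]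
  congr 1
  have : (∑ j, (2 * π * (k j : ℝ)) * (a - b) j)
      = (∑ j, (2 * π * (k j : ℝ)) * a j) + ∑ j, (2 * π * ((-k) j : ℝ)) * b j := by
    rw [← Finset.sum_add_distrib]
    refine Finset.sum_congr rfl fun j _ => ?_
    simp [Pi.sub_apply, Pi.neg_apply]
    ring
  rw [this]
  push_cast
  ring

lemma indicator_pi {ι : Type*} [Fintype ι] {α : ι → Type*} (s : ∀ i, Set (α i))
    (f : ∀ i, α i → ℂ) (x : ∀ i, α i) :
    (Set.univ.pi s).indicator (fun x => ∏ i, f i (x i)) x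
      = ∏ i, (s i).indicator (f i) (x i) := by
  by_cases hx : x ∈ Set.univ.pi s
  · rw [Set.indicator_of_mem hx]
    exact Finset.prod_congr rfl fun i _ => (Set.indicator_of_mem (hx i trivial) _).symm
  · rw [Set.indicator_of_notMem hx]
    rw [Set.mem_univ_pi] at hx
    push_neg at hx
    obtain ⟨i, hi⟩ := hx
    exact (Finset.prod_eq_zero (Finset.mem_univ i) (Set.indicator_of_notMem hi _)).symm

lemma integral_ee (d : ℕ) (k : Fin d → ℤ) :
    ∫ y in boxd d, ee d k y = if k = 0 then 1 else 0 := by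
  rw [← integral_indicator (boxd_meas d)]
  have hfun : (boxd d).indicator (ee d k)
      = fun y => ∏ j, (Set.Icc (0:ℝ) 1).indicator
        (fun t => Complex.exp (Complex.I * (2 * π * (k j : ℝ)) * t)) (y j) := by
    funext y
    rw [show ee d k = fun y => ∏ j, Complex.exp (Complex.I * (2 * π * (k j : ℝ)) * y j)
      from funext (ee_prod d k)]
    exact indicator_pi (fun _ => Set.Icc (0:ℝ) 1)
      (fun j t => Complex.exp (Complex.I * (2 * π * (k j : ℝ)) * t)) y
  rw [hfun]
  rw [MeasureTheory.integral_fintype_prod_volume_eq_prod (ι := Fin d)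
    (f := fun j t => (Set.Icc (0:ℝ) 1).indicator
      (fun t => Complex.exp (Complex.I * (2 * π * (k j : ℝ)) * t)) t)]
  have h1 : ∀ j : Fin d, (∫ t : ℝ, (Set.Icc (0:ℝ) 1).indicator
      (fun t => Complex.exp (Complex.I * (2 * π * (k j : ℝ)) * t)) t)
      = if k j = 0 then 1 else 0 := by
    intro j
    rw [integral_indicator measurableSet_Icc]
    exact int1d (k j)
  rw [Finset.prod_congr rfl fun j _ => h1 j]
  by_cases hk : k = 0
  · simp [hk]
  · rw [if_neg hk]
    have : ∃ j, k j ≠ 0 := by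
      by_contra h; push_neg at h; exact hk (funext h)
    obtain ⟨j, hj⟩ := this
    exact Finset.prod_eq_zero (Finset.mem_univ j) (by rw [if_neg hj])

/-- Fubini-type product formula over the box. -/
lemma integral_boxN_prod (d N : ℕ) (F : Fin N → (Fin d → ℝ) → ℂ) :
    ∫ x in boxN d N, ∏ i, F i (x i) = ∏ i, ∫ y in boxd d, F i y := by
  rw [← integral_indicator (boxN_meas d N)]
  have hfun : (boxN d N).indicator (fun x => ∏ i, F i (x i))
      = fun x => ∏ i, (boxd d).indicator (F i) (x i) :=
    funext fun x => indicator_pi (fun _ => boxd d) F x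
  rw [hfun]
  rw [MeasureTheory.integral_fintype_prod_volume_eq_prod (ι := Fin N)
    (f := fun i y => (boxd d).indicator (F i) y)]
  exact Finset.prod_congr rfl fun i _ => integral_indicator (boxd_meas d)

/-- Product of two `ee`'s at distinct particles as an `N`-fold product. -/
lemma prod_two (d N : ℕ) (i0 j0 : Fin N) (hij : i0 ≠ j0) (k : Fin d → ℤ)
    (x : Fin N → Fin d → ℝ) :
    ee d k (x i0) * ee d (-k) (x j0)
      = ∏ i, (if i = i0 then ee d k else if i = j0 then ee d (-k) else fun _ => 1) (x i) := by
  classical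
  set F := fun i => (if i = i0 then ee d k else if i = j0 then ee d (-k) else fun _ : Fin d → ℝ => 1)
  have h1 : ∏ i, F i (x i) = F i0 (x i0) * ∏ i ∈ Finset.univ.erase i0, F i (x i) :=
    (Finset.mul_prod_erase _ _ (Finset.mem_univ i0)).symm
  have hj0 : j0 ∈ Finset.univ.erase i0 := Finset.mem_erase.2 ⟨fun h => hij h.symm, Finset.mem_univ _⟩
  have h2 : ∏ i ∈ Finset.univ.erase i0, F i (x i)
      = F j0 (x j0) * ∏ i ∈ (Finset.univ.erase i0).erase j0, F i (x i) :=
    (Finset.mul_prod_erase _ _ hj0).symm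
  have h3 : ∏ i ∈ (Finset.univ.erase i0).erase j0, F i (x i) = 1 := by
    apply Finset.prod_eq_one
    intro i hi
    rw [Finset.mem_erase, Finset.mem_erase] at hi
    simp only [F, if_neg hi.2.1, if_neg hi.1]
  rw [h1, h2, h3, mul_one]
  have e1 : F i0 = ee d k := by simp only [F, if_pos rfl]
  have e2 : F j0 = ee d (-k) := by
    simp only [F]
    rw [if_neg (show j0 ≠ i0 from fun h => hij h.symm)]
    simp
  rw [e1, e2]

lemma integral_pair_ee (d N : ℕ) (i0 j0 : Fin N) (hij : i0 ≠ j0) (k : Fin d → ℤ) :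
    ∫ x in boxN d N, ee d k (x i0) * ee d (-k) (x j0) = if k = 0 then 1 else 0 := by
  classical
  rw [show (fun x : Fin N → Fin d → ℝ => ee d k (x i0) * ee d (-k) (x j0))
      = fun x => ∏ i, (if i = i0 then ee d k else if i = j0 then ee d (-k) else fun _ => 1) (x i)
    from funext fun x => prod_two d N i0 j0 hij k x]
  rw [integral_boxN_prod]
  have hval : ∀ i : Fin N,
      (∫ y in boxd d, (if i = i0 then ee d k else if i = j0 then ee d (-k) else fun _ => 1) y)
      = if i = i0 then (if k = 0 then 1 else 0) else if i = j0 then (if k = 0 then 1 else 0)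
        else 1 := by
    intro i
    by_cases h1 : i = i0
    · simp only [if_pos h1]
      exact integral_ee d k
    · by_cases h2 : i = j0
      · simp only [if_neg h1, if_pos h2]
        rw [integral_ee d (-k)]
        simp [neg_eq_zero]
      · simp only [if_neg h1, if_neg h2]
        rw [MeasureTheory.setIntegral_const]
        rw [Measure.real, boxd_vol]
        simp
  rw [Finset.prod_congr rfl fun i _ => hval i]
  by_cases hk : k = 0
  · simp [hk]
  · simp only [if_neg hk]
    refine Finset.prod_eq_zero (Finset.mem_univ i0) ?_
    rw [if_pos rfl]



section WithPot
variable {d : ℕ} {v : (Fin d → ℝ) → ℝ} {vhat : (Fin d → ℤ) → ℝ}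

lemma expand (hv : PotentialAssumptions d v vhat) (x : Fin d → ℝ) :
    (v x : ℂ) = ∑' k : Fin d → ℤ, (vhat k : ℂ) * ee d k x := hv.expansion x

lemma ee_nnnorm (d : ℕ) (k : Fin d → ℤ) (y : Fin d → ℝ) : ‖ee d k y‖₊ = 1 :=
  NNReal.eq (by rw [coe_nnnorm, ee_norm, NNReal.coe_one])

lemma vhat0 (hv : PotentialAssumptions d v vhat) : vhat 0 = ∫ y in boxd d, v y := by
  have h := hv.coeffs 0
  have h2 : ∀ x : Fin d → ℝ,
      (v x : ℂ) * Complex.exp (-Complex.I * ∑ j, (2 * π * (((0 : Fin d → ℤ) j) : ℝ)) * x j)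
      = ((v x : ℝ) : ℂ) := by
    intro x
    simp
  rw [integral_congr_ae (Filter.Eventually.of_forall h2)] at h
  have h3 : ∫ x in boxd d, ((v x : ℝ) : ℂ) = ((∫ x in boxd d, v x : ℝ) : ℂ) := integral_ofReal
  rw [h3] at h
  exact_mod_cast h

lemma integral_pair (hv : PotentialAssumptions d v vhat) (N : ℕ) (i0 j0 : Fin N)
    (hij : i0 ≠ j0) : ∫ x in boxN d N, v (x i0 - x j0) = vhat 0 := by
  have hrw : ∀ x : Fin N → Fin d → ℝ, ((v (x i0 - x j0)) : ℂ)
      = ∑' p : Fin d → ℤ, ((vhat p : ℂ) * ee d p (x i0) * ee d (-p) (x j0)) := by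
    intro x
    rw [expand hv (x i0 - x j0)]
    exact tsum_congr fun p => by rw [ee_sub, mul_assoc]
  have hmeas : ∀ p : Fin d → ℤ, AEStronglyMeasurable
      (fun x : Fin N → Fin d → ℝ => (vhat p : ℂ) * ee d p (x i0) * ee d (-p) (x j0))
      (volume.restrict (boxN d N)) := fun p => (((continuous_const.mul
      ((ee_continuous d p).comp (continuous_apply i0))).mul
      ((ee_continuous d (-p)).comp (continuous_apply j0)))).aestronglyMeasurable
  have hb : ∀ p : Fin d → ℤ,
      ∫⁻ x in boxN d N, ‖(vhat p : ℂ) * ee d p (x i0) * ee d (-p) (x j0)‖₊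
      = (‖vhat p‖₊ : ENNReal) := by
    intro p
    have hx : ∀ x : Fin N → Fin d → ℝ,
        (‖(vhat p : ℂ) * ee d p (x i0) * ee d (-p) (x j0)‖₊ : ENNReal)
        = (‖vhat p‖₊ : ENNReal) := by
      intro x
      rw [nnnorm_mul, nnnorm_mul, ee_nnnorm, ee_nnnorm, mul_one, mul_one]
      norm_cast
    rw [lintegral_congr fun x => hx x, MeasureTheory.setLIntegral_const, boxN_vol, mul_one]
  have hfin : ∑' p : Fin d → ℤ, ∫⁻ x in boxN d N,
      ‖(vhat p : ℂ) * ee d p (x i0) * ee d (-p) (x j0)‖₊ ≠ ⊤ := by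
    rw [tsum_congr hb, ENNReal.tsum_coe_ne_top_iff_summable, ← NNReal.summable_coe]
    simpa [coe_nnnorm] using hv.summable.abs
  have key : ∫ x in boxN d N, ((v (x i0 - x j0) : ℝ) : ℂ) = (vhat 0 : ℂ) := by
    rw [integral_congr_ae (Filter.Eventually.of_forall hrw)]
    rw [MeasureTheory.integral_tsum (f := fun (p : Fin d → ℤ) (x : Fin N → Fin d → ℝ) =>
      (vhat p : ℂ) * ee d p (x i0) * ee d (-p) (x j0)) hmeas hfin]
    have hterm : ∀ p : Fin d → ℤ,
        (∫ x in boxN d N, (vhat p : ℂ) * ee d p (x i0) * ee d (-p) (x j0))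
        = (vhat p : ℂ) * (if p = 0 then 1 else 0) := by
      intro p
      have : (fun x : Fin N → Fin d → ℝ => (vhat p : ℂ) * ee d p (x i0) * ee d (-p) (x j0))
          = fun x => (vhat p : ℂ) * (ee d p (x i0) * ee d (-p) (x j0)) :=
        funext fun x => mul_assoc _ _ _
      rw [this, MeasureTheory.integral_const_mul, integral_pair_ee d N i0 j0 hij p]
    rw [tsum_congr hterm, tsum_eq_single 0 (fun p hp => by rw [if_neg hp, mul_zero])]
    simp
  have h3 : ∫ x in boxN d N, ((v (x i0 - x j0) : ℝ) : ℂ)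
      = ((∫ x in boxN d N, v (x i0 - x j0) : ℝ) : ℂ) := integral_ofReal
  rw [h3] at key
  exact_mod_cast key

lemma summand_summable (hv : PotentialAssumptions d v vhat) (a b : Fin d → ℝ) :
    Summable (fun p : Fin d → ℤ => (vhat p : ℂ) * ee d p a * ee d (-p) b) := by
  apply Summable.of_norm_bounded hv.summable
  intro p
  rw [norm_mul, norm_mul, ee_norm, ee_norm, mul_one, mul_one, Complex.norm_real]
  rw [Real.norm_eq_abs, abs_of_nonneg (hv.nonneg p)]

set_option maxHeartbeats 1000000 in
lemma pointwise_bound (hv : PotentialAssumptions d v vhat) (N : ℕ)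
    (x : Fin N → Fin d → ℝ) :
    (N : ℝ)^2 * vhat 0 ≤ ∑ i, ∑ j, v (x i - x j) := by
  classical
  set S : (Fin d → ℤ) → ℂ := fun p => ∑ i, ee d p (x i) with hS
  set g : (Fin d → ℤ) → ℝ := fun p => vhat p * ‖S p‖^2 with hg
  have hgnn : ∀ p, 0 ≤ g p := fun p => mul_nonneg (hv.nonneg p) (sq_nonneg _)
  have hgsum : Summable g := by
    apply Summable.of_nonneg_of_le hgnn (fun p => ?_) (hv.summable.mul_right ((N:ℝ)^2))
    have hSle : ‖S p‖ ≤ (N:ℝ) := by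
      calc ‖S p‖ ≤ ∑ i, ‖ee d p (x i)‖ := norm_sum_le _ _
      _ = ∑ _i : Fin N, (1:ℝ) := Finset.sum_congr rfl fun i _ => ee_norm d p (x i)
      _ = (N:ℝ) := by simp
    have h2 : ‖S p‖^2 ≤ (N:ℝ)^2 := pow_le_pow_left₀ (norm_nonneg _) hSle 2
    exact mul_le_mul_of_nonneg_left h2 (hv.nonneg p)
  have hC : ((∑ i, ∑ j, v (x i - x j) : ℝ) : ℂ) = ∑' p, (g p : ℂ) := by
    push_cast
    rw [show (∑ i, ∑ j, ((v (x i - x j)) : ℂ))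
        = ∑ ij : Fin N × Fin N, ((v (x ij.1 - x ij.2)) : ℂ) from
      (Fintype.sum_prod_type (f := fun ij : Fin N × Fin N => ((v (x ij.1 - x ij.2)) : ℂ))).symm]
    have hexp : ∀ ij : Fin N × Fin N, ((v (x ij.1 - x ij.2)) : ℂ)
        = ∑' p : Fin d → ℤ, (vhat p : ℂ) * ee d p (x ij.1) * ee d (-p) (x ij.2) := by
      intro ij
      rw [expand hv (x ij.1 - x ij.2)]
      exact tsum_congr fun p => by rw [ee_sub, mul_assoc]
    rw [Finset.sum_congr rfl fun ij _ => hexp ij]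
    rw [← Summable.tsum_finsetSum (fun ij _ => summand_summable hv (x ij.1) (x ij.2))]
    refine tsum_congr fun p => ?_
    rw [Fintype.sum_prod_type]
    have hfact : ∑ i, ∑ j, (vhat p : ℂ) * ee d p (x i) * ee d (-p) (x j)
        = (vhat p : ℂ) * S p * ∑ j, ee d (-p) (x j) := by
      show ∑ i, ∑ j, (vhat p : ℂ) * ee d p (x i) * ee d (-p) (x j)
          = (vhat p : ℂ) * (∑ i, ee d p (x i)) * ∑ j, ee d (-p) (x j)
      calc ∑ i, ∑ j, (vhat p : ℂ) * ee d p (x i) * ee d (-p) (x j)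
          = ∑ i, ((vhat p : ℂ) * ee d p (x i)) * ∑ j, ee d (-p) (x j) :=
        Finset.sum_congr rfl fun i _ => (Finset.mul_sum _ _ _).symm
      _ = (∑ i, (vhat p : ℂ) * ee d p (x i)) * ∑ j, ee d (-p) (x j) :=
        (Finset.sum_mul _ _ _).symm
      _ = (vhat p : ℂ) * (∑ i, ee d p (x i)) * ∑ j, ee d (-p) (x j) := by
        rw [← Finset.mul_sum]
    have hconj : (∑ j, ee d (-p) (x j)) = (starRingEnd ℂ) (S p) := by
      show _ = (starRingEnd ℂ) (∑ i, ee d p (x i))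
      rw [map_sum]
      exact Finset.sum_congr rfl fun j _ => ee_neg d p (x j)
    rw [hfact, hconj, mul_assoc, Complex.mul_conj, hg]
    push_cast [Complex.normSq_eq_norm_sq]
    ring
  have hreal : (∑ i, ∑ j, v (x i - x j)) = ∑' p, g p := by
    have h2 := hC.trans (Complex.ofReal_tsum g).symm
    exact_mod_cast h2
  rw [hreal]
  have h0 : g 0 = (N:ℝ)^2 * vhat 0 := by
    have hS0 : S 0 = (N : ℂ) := by
      rw [hS]
      simp [ee_zero]
    have hrfl : g 0 = vhat 0 * ‖S 0‖^2 := rfl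
    rw [hrfl, hS0, Complex.norm_natCast]
    ring
  calc (N:ℝ)^2 * vhat 0 = g 0 := h0.symm
  _ ≤ ∑' p, g p := Summable.le_tsum hgsum 0 fun p _ => hgnn p

lemma pairSum (N : ℕ) (c : ℝ) :
    ∑ i : Fin N, ∑ j : Fin N, (if i < j then c else 0) = ((N:ℝ)^2 - N)/2 * c := by
  classical
  have tri : ∀ i j : Fin N, (if i < j then c else 0) + (if j < i then c else 0)
      + (if i = j then c else 0) = c := by
    intro i j
    rcases lt_trichotomy i j with h|h|h
    · rw [if_pos h, if_neg (asymm h), if_neg (ne_of_lt h), add_zero, add_zero]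
    · rw [if_neg (by simp [h]), if_neg (by simp [h]), if_pos h, zero_add, zero_add]
    · rw [if_neg (asymm h), if_pos h, if_neg (ne_of_gt h), zero_add, add_zero]
  have hBA : (∑ i : Fin N, ∑ j : Fin N, (if j < i then c else 0))
      = ∑ i : Fin N, ∑ j : Fin N, (if i < j then c else 0) := Finset.sum_comm
  have hD : (∑ i : Fin N, ∑ j : Fin N, (if i = j then c else 0)) = (N:ℝ) * c := by
    have h1 : ∀ i : Fin N, (∑ j : Fin N, if i = j then c else 0) = c := by
      intro i; rw [Finset.sum_ite_eq]; simp
    rw [Finset.sum_congr rfl fun i _ => h1 i, Finset.sum_const, Finset.card_univ,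
      Fintype.card_fin, nsmul_eq_mul]
  have htot : (∑ i : Fin N, ∑ j : Fin N, (if i < j then c else 0))
      + (∑ i : Fin N, ∑ j : Fin N, (if j < i then c else 0))
      + (∑ i : Fin N, ∑ j : Fin N, (if i = j then c else 0)) = (N:ℝ)^2 * c := by
    simp_rw [← Finset.sum_add_distrib]
    rw [Finset.sum_congr rfl fun i _ => Finset.sum_congr rfl fun j _ => tri i j]
    simp [Finset.sum_const, Finset.card_univ]
    ring
  linarith

lemma pair_v_bound (hv : PotentialAssumptions d v vhat) (N : ℕ) (x : Fin N → Fin d → ℝ) :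
    ((N:ℝ)^2 * vhat 0 - N * v 0)/2
      ≤ ∑ i : Fin N, ∑ j : Fin N, (if i < j then v (x i - x j) else 0) := by
  classical
  have tri : ∀ i j : Fin N, (if i < j then v (x i - x j) else 0)
      + (if j < i then v (x i - x j) else 0)
      + (if i = j then v (x i - x j) else 0) = v (x i - x j) := by
    intro i j
    rcases lt_trichotomy i j with h|h|h
    · rw [if_pos h, if_neg (asymm h), if_neg (ne_of_lt h), add_zero, add_zero]
    · rw [if_neg (by simp [h]), if_neg (by simp [h]), if_pos h, zero_add, zero_add]
    · rw [if_neg (asymm h), if_pos h, if_neg (ne_of_gt h), zero_add, add_zero]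
  have hBA : (∑ i : Fin N, ∑ j : Fin N, (if j < i then v (x i - x j) else 0))
      = ∑ i : Fin N, ∑ j : Fin N, (if i < j then v (x i - x j) else 0) := by
    rw [Finset.sum_comm]
    refine Finset.sum_congr rfl fun a _ => Finset.sum_congr rfl fun b _ => ?_
    by_cases h : a < b
    · rw [if_pos h, if_pos h, ← hv.even (x a - x b), neg_sub]
    · rw [if_neg h, if_neg h]
  have hD : (∑ i : Fin N, ∑ j : Fin N, (if i = j then v (x i - x j) else 0))
      = (N:ℝ) * v 0 := by
    have h1 : ∀ i : Fin N, (∑ j : Fin N, if i = j then v (x i - x j) else 0) = v 0 := by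
      intro i
      rw [Finset.sum_ite_eq]
      simp [sub_self]
    rw [Finset.sum_congr rfl fun i _ => h1 i, Finset.sum_const, Finset.card_univ,
      Fintype.card_fin, nsmul_eq_mul]
  have htot : (∑ i : Fin N, ∑ j : Fin N, (if i < j then v (x i - x j) else 0))
      + (∑ i : Fin N, ∑ j : Fin N, (if j < i then v (x i - x j) else 0))
      + (∑ i : Fin N, ∑ j : Fin N, (if i = j then v (x i - x j) else 0))
      = ∑ i : Fin N, ∑ j : Fin N, v (x i - x j) := by
    simp_rw [← Finset.sum_add_distrib]
    exact Finset.sum_congr rfl fun i _ => Finset.sum_congr rfl fun j _ => tri i j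
  have hge := pointwise_bound hv N x
  linarith

lemma integrable_ite_pair {N : ℕ} (hv : PotentialAssumptions d v vhat)
    {Ψ : (Fin N → Fin d → ℝ) → ℂ} (hΨc : Continuous Ψ) (i j : Fin N) :
    IntegrableOn (fun x : Fin N → Fin d → ℝ =>
      if i < j then v (x i - x j) * ‖Ψ x‖^2 else 0) (boxN d N) := by
  by_cases h : i < j
  · simp only [if_pos h]
    exact ((hv.continuous.comp ((continuous_apply i).sub (continuous_apply j))).mul
      ((hΨc.norm).pow 2)).continuousOn.integrableOn_compact (boxN_compact d N)
  · simp only [if_neg h]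
    exact integrableOn_zero

lemma energy_ge (hv : PotentialAssumptions d v vhat) (N : ℕ) (hN : 2 ≤ N)
    (Ψ : (Fin N → Fin d → ℝ) → ℂ) (hc : ContDiff ℝ (⊤ : ℕ∞) Ψ) (hnorm : Normalized d N Ψ) :
    (N:ℝ)/2 * vhat 0 - (N:ℝ)/(2*((N:ℝ)-1)) * (v 0 - vhat 0) ≤ energyForm d N v Ψ := by
  have hNR : (2:ℝ) ≤ (N:ℝ) := by exact_mod_cast hN
  have hN1 : (0:ℝ) < (N:ℝ) - 1 := by linarith
  have hkin : 0 ≤ kineticEnergy d N Ψ := by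
    apply Finset.sum_nonneg; intro i _
    apply MeasureTheory.setIntegral_nonneg (boxN_meas d N)
    intro x _; exact Finset.sum_nonneg fun j _ => sq_nonneg _
  have hΨc : Continuous Ψ := hc.continuous
  set C : ℝ := ((N:ℝ)^2 * vhat 0 - N * v 0)/2 with hC
  have hcomb : ∫ x in boxN d N, (∑ i : Fin N, ∑ j : Fin N,
        if i < j then v (x i - x j) * ‖Ψ x‖^2 else 0)
      = ∑ i : Fin N, ∑ j : Fin N,
        (if i < j then ∫ x in boxN d N, v (x i - x j) * ‖Ψ x‖^2 else 0) := by
    rw [MeasureTheory.integral_finset_sum _ (fun i _ =>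
      MeasureTheory.integrable_finset_sum _ (fun j _ => integrable_ite_pair hv hΨc i j))]
    refine Finset.sum_congr rfl fun i _ => ?_
    rw [MeasureTheory.integral_finset_sum _ (fun j _ => integrable_ite_pair hv hΨc i j)]
    refine Finset.sum_congr rfl fun j _ => ?_
    by_cases h : i < j
    · simp only [if_pos h]
    · simp only [if_neg h, integral_zero]
  have hptw : ∀ x ∈ boxN d N, C * ‖Ψ x‖^2
      ≤ ∑ i : Fin N, ∑ j : Fin N, (if i < j then v (x i - x j) * ‖Ψ x‖^2 else 0) := by
    intro x _
    have h1 := pair_v_bound hv N x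
    have h2 : (∑ i : Fin N, ∑ j : Fin N, (if i < j then v (x i - x j) * ‖Ψ x‖^2 else 0))
        = (∑ i : Fin N, ∑ j : Fin N, (if i < j then v (x i - x j) else 0)) * ‖Ψ x‖^2 := by
      rw [Finset.sum_mul]
      refine Finset.sum_congr rfl fun i _ => ?_
      rw [Finset.sum_mul]
      refine Finset.sum_congr rfl fun j _ => ?_
      by_cases h : i < j
      · rw [if_pos h, if_pos h]
      · rw [if_neg h, if_neg h, zero_mul]
    rw [h2, hC]
    exact mul_le_mul_of_nonneg_right h1 (sq_nonneg _)
  have hmono : C ≤ ∫ x in boxN d N, (∑ i : Fin N, ∑ j : Fin N,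
      if i < j then v (x i - x j) * ‖Ψ x‖^2 else 0) := by
    have hCint : ∫ x in boxN d N, C * ‖Ψ x‖^2 = C := by
      rw [MeasureTheory.integral_const_mul, hnorm, mul_one]
    rw [← hCint]
    apply MeasureTheory.setIntegral_mono_on
    · exact (continuous_const.mul ((hΨc.norm).pow 2)).continuousOn.integrableOn_compact
        (boxN_compact d N)
    · exact MeasureTheory.integrable_finset_sum _ (fun i _ =>
        MeasureTheory.integrable_finset_sum _ (fun j _ => integrable_ite_pair hv hΨc i j))
    · exact boxN_meas d N
    · exact hptw
  have hpot : ((N:ℝ) - 1)⁻¹ * C ≤ potentialEnergy d N v Ψ := by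
    rw [potentialEnergy]
    rw [← hcomb]
    exact mul_le_mul_of_nonneg_left hmono (inv_nonneg.2 (le_of_lt hN1))
  have harith : ((N:ℝ) - 1)⁻¹ * C
      = (N:ℝ)/2 * vhat 0 - (N:ℝ)/(2*((N:ℝ)-1)) * (v 0 - vhat 0) := by
    rw [hC]
    field_simp
    ring
  rw [energyForm]
  rw [← harith]
  linarith

lemma energy_one (hv : PotentialAssumptions d v vhat) (N : ℕ) (hN : 2 ≤ N) :
    energyForm d N v (fun _ => (1:ℂ)) = (N:ℝ)/2 * vhat 0 := by
  have hNR : (2:ℝ) ≤ (N:ℝ) := by exact_mod_cast hN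
  have hN1 : ((N:ℝ) - 1) ≠ 0 := by intro h; nlinarith
  have hkin : kineticEnergy d N (fun _ => (1:ℂ)) = 0 := by
    rw [kineticEnergy]
    refine Finset.sum_eq_zero fun i _ => ?_
    have h0 : ∀ x : Fin N → Fin d → ℝ,
        (∑ j : Fin d, ‖fderiv ℝ (fun _ : Fin N → Fin d → ℝ => (1:ℂ)) x (dir d N i j)‖^2) = 0 := by
      intro x
      refine Finset.sum_eq_zero fun j _ => ?_
      rw [fderiv_fun_const]
      simp
    rw [integral_congr_ae (Filter.Eventually.of_forall h0), integral_zero]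
  have hpot : potentialEnergy d N v (fun _ => (1:ℂ)) = (N:ℝ)/2 * vhat 0 := by
    rw [potentialEnergy]
    have hterm : ∀ i j : Fin N, i < j →
        (∫ x in boxN d N, v (x i - x j) * ‖(1:ℂ)‖^2) = vhat 0 := by
      intro i j hij
      have : ∀ x : Fin N → Fin d → ℝ, v (x i - x j) * ‖(1:ℂ)‖^2 = v (x i - x j) := by
        intro x; simp
      rw [integral_congr_ae (Filter.Eventually.of_forall this)]
      exact integral_pair hv N i j (ne_of_lt hij)
    have hsum : (∑ i : Fin N, ∑ j : Fin N,
        if i < j then (∫ x in boxN d N, v (x i - x j) * ‖(1:ℂ)‖^2) else 0)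
        = ∑ i : Fin N, ∑ j : Fin N, (if i < j then vhat 0 else 0) := by
      refine Finset.sum_congr rfl fun i _ => Finset.sum_congr rfl fun j _ => ?_
      by_cases h : i < j
      · rw [if_pos h, if_pos h, hterm i j h]
      · rw [if_neg h, if_neg h]
    rw [hsum, pairSum]
    field_simp
  rw [energyForm, hkin, hpot, zero_add]

end WithPot

end Aux

theorem statement3 (d : ℕ) (hd : 1 ≤ d) (v : (Fin d → ℝ) → ℝ) (vhat : (Fin d → ℤ) → ℝ)
    (hv : PotentialAssumptions d v vhat) (N : ℕ) (hN : 2 ≤ N) :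
    0 ≥ E0 d N v - (N : ℝ) / 2 * vhat 0 ∧
    E0 d N v - (N : ℝ) / 2 * vhat 0 ≥
      -((N : ℝ) / (2 * ((N : ℝ) - 1))) * (v 0 - vhat 0) := by
  classical
  set L : ℝ := (N:ℝ)/2 * vhat 0 - (N:ℝ)/(2*((N:ℝ)-1)) * (v 0 - vhat 0) with hL
  set Sset : Set ℝ := {E : ℝ | ∃ Ψ : (Fin N → Fin d → ℝ) → ℂ, ContDiff ℝ (⊤ : ℕ∞) Ψ ∧
    PeriodicWF d N Ψ ∧ SymmetricWF d N Ψ ∧ Normalized d N Ψ ∧ E = energyForm d N v Ψ}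
    with hSset
  have hnorm1 : Normalized d N (fun _ => (1:ℂ)) := by
    rw [Normalized]
    have : ∀ x : Fin N → Fin d → ℝ, (‖(1:ℂ)‖^2 : ℝ) = 1 := by intro x; simp
    rw [integral_congr_ae (Filter.Eventually.of_forall this)]
    rw [MeasureTheory.setIntegral_const, Measure.real, Aux.boxN_vol]
    simp
  have hmem : (N:ℝ)/2 * vhat 0 ∈ Sset := by
    refine ⟨fun _ => (1:ℂ), contDiff_const, fun x k => rfl, fun σ x => rfl, hnorm1, ?_⟩
    rw [Aux.energy_one hv N hN]
  have hlb : ∀ E ∈ Sset, L ≤ E := by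
    rintro E ⟨Ψ, hc, _, _, hnormΨ, rfl⟩
    exact Aux.energy_ge hv N hN Ψ hc hnormΨ
  have hE0eq : E0 d N v = sInf Sset := rfl
  have hub : E0 d N v ≤ (N:ℝ)/2 * vhat 0 := by
    rw [hE0eq]
    exact csInf_le ⟨L, hlb⟩ hmem
  have hlow : L ≤ E0 d N v := by
    rw [hE0eq]
    exact le_csInf ⟨_, hmem⟩ hlb
  constructor
  · linarith
  · have : -((N : ℝ) / (2 * ((N : ℝ) - 1))) * (v 0 - vhat 0)
        = L - (N:ℝ)/2 * vhat 0 := by rw [hL]; ring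
    rw [ge_iff_le, this]
    exact sub_le_sub_right hlow _
end
end

section
/- Let N ≥ 2, let μ ∈ ℝ, and let Ψ : (ℝ^d)^N → ℂ be smooth, 1-periodic in each coordinate, with ∫_{[0,1]^{dN}} |Ψ|² = 1 and E_N(Ψ) ≤ (N/2)·v̂(0) + μ. Then the kinetic energy satisfies ∑_{i=1}^N ∫_{[0,1]^{dN}} |∇_{x_i}Ψ|² dx ≤ (N/(2(N−1)))·(v(0) − v̂(0)) + μ. -/
open MeasureTheory Real

noncomputable section

lemma key_pointwise (d : ℕ) (v : (Fin d → ℝ) → ℝ) (vhat : (Fin d → ℤ) → ℝ)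
    (hexp : HasFourierExpansion d v vhat) (hnn : ∀ k, 0 ≤ vhat k) (hsum : Summable vhat)
    (N : ℕ) (x : Fin N → Fin d → ℝ) :
    (N : ℝ)^2 * vhat 0 ≤ ∑ i : Fin N, ∑ i' : Fin N, v (x i - x i') := by
  classical
  set A : (Fin d → ℤ) → Fin N → ℝ := fun k i => ∑ j, 2 * π * (k j : ℝ) * x i j with hA
  set E : (Fin d → ℤ) → Fin N → ℂ := fun k i => Complex.exp (Complex.I * (A k i : ℂ)) with hE
  have hnormE : ∀ k i, ‖E k i‖ = 1 := by
    intro k i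
    simp [hE, Complex.norm_exp]
  set S : (Fin d → ℤ) → ℂ := fun k => ∑ i, E k i with hS
  have hnormS : ∀ k, ‖S k‖ ≤ N := by
    intro k
    calc ‖S k‖ ≤ ∑ i, ‖E k i‖ := norm_sum_le _ _
    _ = N := by simp [hnormE]
  -- pairwise expansion
  have hpair : ∀ i i', (v (x i - x i') : ℂ)
      = ∑' k, (vhat k : ℂ) * (E k i * (starRingEnd ℂ) (E k i')) := by
    intro i i'
    rw [hexp (x i - x i')]
    congr 1
    funext k
    have h1 : (∑ j, 2 * π * (k j : ℝ) * (x i - x i') j)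
        = A k i - A k i' := by
      simp only [Pi.sub_apply, hA]
      rw [← Finset.sum_sub_distrib]
      congr 1; funext j; ring
    have h2 : (starRingEnd ℂ) (E k i') = Complex.exp (-(Complex.I * (A k i' : ℂ))) := by
      rw [hE]
      rw [← Complex.exp_conj]
      congr 1
      simp
    rw [h2, hE]
    rw [← Complex.exp_add]
    congr 1
    rw [h1]
    push_cast
    ring
  -- summability of each pair series
  have hsumpair : ∀ i i', Summable (fun k => (vhat k : ℂ) * (E k i * (starRingEnd ℂ) (E k i'))) := by
    intro i i'
    apply Summable.of_norm
    have : (fun k => ‖(vhat k : ℂ) * (E k i * (starRingEnd ℂ) (E k i'))‖) = fun k => vhat k := by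
      funext k
      simp [norm_mul, hnormE, abs_of_nonneg (hnn k)]
    rw [this]; exact hsum
  -- swap sums
  have hswap : ((∑ i : Fin N, ∑ i' : Fin N, v (x i - x i') : ℝ) : ℂ)
      = ∑' k, (vhat k : ℂ) * (S k * (starRingEnd ℂ) (S k)) := by
    push_cast
    calc (∑ i : Fin N, ∑ i' : Fin N, (v (x i - x i') : ℂ))
        = ∑ i : Fin N, ∑ i' : Fin N, ∑' k, (vhat k : ℂ) * (E k i * (starRingEnd ℂ) (E k i')) := by
          simp_rw [hpair]
      _ = ∑' k, ∑ i : Fin N, ∑ i' : Fin N, (vhat k : ℂ) * (E k i * (starRingEnd ℂ) (E k i')) := by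
          rw [Summable.tsum_finsetSum]
          · congr 1; funext i; rw [Summable.tsum_finsetSum]; intro i' _; exact hsumpair i i'
          · intro i _; exact summable_sum fun i' _ => hsumpair i i'
      _ = ∑' k, (vhat k : ℂ) * (S k * (starRingEnd ℂ) (S k)) := by
          congr 1; funext k
          rw [hS]
          simp only [map_sum, Finset.mul_sum, Finset.sum_mul]
          rw [Finset.sum_comm]
  set g : (Fin d → ℤ) → ℝ := fun k => vhat k * ‖S k‖^2 with hg
  have hgnn : ∀ k, 0 ≤ g k := fun k => mul_nonneg (hnn k) (sq_nonneg _)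
  have hgsum : Summable g := by
    apply Summable.of_nonneg_of_le hgnn (fun k => ?_) (hsum.mul_right ((N:ℝ)^2))
    have := hnormS k
    calc g k = vhat k * ‖S k‖^2 := rfl
    _ ≤ vhat k * (N:ℝ)^2 := by
        apply mul_le_mul_of_nonneg_left _ (hnn k)
        exact pow_le_pow_left₀ (norm_nonneg _) this 2
  have hD : (∑ i : Fin N, ∑ i' : Fin N, v (x i - x i')) = ∑' k, g k := by
    have h3 : ∀ k, (vhat k : ℂ) * (S k * (starRingEnd ℂ) (S k)) = ((g k : ℝ) : ℂ) := by
      intro k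
      rw [Complex.mul_conj]
      rw [hg]
      push_cast
      rw [Complex.normSq_eq_norm_sq]
      push_cast
      ring
    have := hswap
    simp_rw [h3] at this
    rw [← Complex.ofReal_tsum] at this
    exact_mod_cast this
  rw [hD]
  have h0 : g 0 = (N:ℝ)^2 * vhat 0 := by
    have hA0 : ∀ i, A 0 i = 0 := by
      intro i; simp [hA]
    have hS0 : S 0 = (N : ℂ) := by
      simp [hS, hE, hA0]
    simp only [hg]
    rw [hS0]
    simp [Complex.norm_natCast, mul_comm]
  calc (N:ℝ)^2 * vhat 0 = g 0 := h0.symm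
  _ ≤ ∑' k, g k := Summable.le_tsum hgsum 0 (fun k _ => hgnn k)

lemma pairsum {N : ℕ} (a : Fin N → Fin N → ℝ) (hsym : ∀ i j, a i j = a j i) :
    ∑ i, ∑ j, (if i < j then a i j else 0)
      = ((∑ i, ∑ j, a i j) - ∑ i, a i i) / 2 := by
  classical
  have key : ∀ i j : Fin N, a i j = (if i < j then a i j else 0)
      + (if j < i then a i j else 0) + (if i = j then a i j else 0) := by
    intro i j
    rcases lt_trichotomy i j with h | h | h
    · simp [h, h.ne, asymm h]
    · simp [h, lt_irrefl]
    · simp [h, h.ne', asymm h]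
  have hQ : ∑ i, ∑ j, (if j < i then a i j else 0) = ∑ i, ∑ j, (if i < j then a i j else 0) := by
    rw [Finset.sum_comm]
    congr 1; funext i
    congr 1; funext j
    by_cases h : i < j <;> simp [h, hsym i j]
  have hDiag : ∑ i, ∑ j, (if i = j then a i j else 0) = ∑ i, a i i := by
    congr 1; funext i
    rw [Finset.sum_ite_eq]
    simp
  have hsplit : ∑ i, ∑ j, a i j = ∑ i, ∑ j, ((if i < j then a i j else 0)
      + (if j < i then a i j else 0) + (if i = j then a i j else 0)) := by
    congr 1; funext i; congr 1; funext j; exact key i j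
  simp only [Finset.sum_add_distrib] at hsplit
  rw [hQ, hDiag] at hsplit
  rw [hsplit]
  ring


theorem statement4 (d : ℕ) (hd : 1 ≤ d) (v : (Fin d → ℝ) → ℝ) (vhat : (Fin d → ℤ) → ℝ)
    (hv : PotentialAssumptions d v vhat) (N : ℕ) (hN : 2 ≤ N) (μ : ℝ)
    (Ψ : (Fin N → Fin d → ℝ) → ℂ) (hsmooth : ContDiff ℝ (⊤ : ℕ∞) Ψ)
    (hper : PeriodicWF d N Ψ) (hnorm : Normalized d N Ψ)
    (henergy : energyForm d N v Ψ ≤ (N : ℝ) / 2 * vhat 0 + μ) :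
    kineticEnergy d N Ψ ≤ (N : ℝ) / (2 * ((N : ℝ) - 1)) * (v 0 - vhat 0) + μ := by

  classical
  have hn2 : (2:ℝ) ≤ (N:ℝ) := by exact_mod_cast hN
  have hn1pos : (0:ℝ) < (N:ℝ) - 1 := by linarith
  have hcomp : IsCompact (boxN d N) :=
    isCompact_univ_pi fun _ => isCompact_univ_pi fun _ => isCompact_Icc
  have hmeas : MeasurableSet (boxN d N) :=
    MeasurableSet.univ_pi fun _ => MeasurableSet.univ_pi fun _ => measurableSet_Icc
  have hΨc : Continuous Ψ := hsmooth.continuous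
  have hΨ2 : Continuous fun x : (Fin N → Fin d → ℝ) => ‖Ψ x‖^2 := hΨc.norm.pow 2
  have hint2 : IntegrableOn (fun x => ‖Ψ x‖^2) (boxN d N) := hΨ2.continuousOn.integrableOn_compact hcomp
  have hintij : ∀ i j : Fin N, IntegrableOn (fun x => v (x i - x j) * ‖Ψ x‖^2) (boxN d N) := by
    intro i j
    exact ((hv.continuous.comp ((continuous_apply i).sub (continuous_apply j))).mul
      hΨ2).continuousOn.integrableOn_compact hcomp
  have hF : ∀ i j : Fin N,
      IntegrableOn (fun x => if i < j then v (x i - x j) * ‖Ψ x‖^2 else 0) (boxN d N) := by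
    intro i j
    by_cases h : i < j
    · simpa [h] using hintij i j
    · simp only [h, if_false]
      exact integrableOn_zero
  set C : ℝ := ((N:ℝ)^2 * vhat 0 - (N:ℝ) * v 0)/2 with hC
  have hpoint : ∀ x : Fin N → Fin d → ℝ,
      C * ‖Ψ x‖^2 ≤ ∑ i, ∑ j, (if i < j then v (x i - x j) * ‖Ψ x‖^2 else 0) := by
    intro x
    have h1 : ∑ i, ∑ j, (if i < j then v (x i - x j) * ‖Ψ x‖^2 else 0)
        = (∑ i, ∑ j, (if i < j then v (x i - x j) else 0)) * ‖Ψ x‖^2 := by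
      rw [Finset.sum_mul]; congr 1; funext i; rw [Finset.sum_mul]; congr 1; funext j
      split_ifs <;> simp
    rw [h1]
    apply mul_le_mul_of_nonneg_right _ (sq_nonneg _)
    have hps := pairsum (fun i j => v (x i - x j)) (fun i j => by
      try simp only
      rw [← hv.even (x j - x i), neg_sub])
    try simp only at hps
    rw [hps]
    have hkey := key_pointwise d v vhat hv.expansion hv.nonneg hv.summable N x
    have hdiag : ∑ i : Fin N, v (x i - x i) = (N:ℝ) * v 0 := by
      simp [sub_self]
    rw [hdiag, hC]
    linarith
  have hTbound : C ≤ ∑ i : Fin N, ∑ j : Fin N,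
      (if i < j then ∫ x in boxN d N, v (x i - x j) * ‖Ψ x‖^2 else 0) := by
    have e1 : ∀ i j : Fin N, (if i < j then ∫ x in boxN d N, v (x i - x j) * ‖Ψ x‖^2 else 0)
        = ∫ x in boxN d N, (if i < j then v (x i - x j) * ‖Ψ x‖^2 else 0) := by
      intro i j
      split_ifs with h
      · rfl
      · simp
    calc C = C * ∫ x in boxN d N, ‖Ψ x‖^2 := by rw [hnorm]; ring
    _ = ∫ x in boxN d N, C * ‖Ψ x‖^2 := (integral_const_mul C _).symm
    _ ≤ ∫ x in boxN d N, ∑ i, ∑ j, (if i < j then v (x i - x j) * ‖Ψ x‖^2 else 0) := by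
        apply setIntegral_mono_on (hint2.const_mul C)
          (integrable_finset_sum _ fun i _ => integrable_finset_sum _ fun j _ => hF i j) hmeas
        intro x _
        exact hpoint x
    _ = ∑ i : Fin N, ∑ j : Fin N,
        ∫ x in boxN d N, (if i < j then v (x i - x j) * ‖Ψ x‖^2 else 0) := by
        rw [integral_finset_sum _ fun i _ => integrable_finset_sum _ fun j _ => hF i j]
        congr 1; funext i
        rw [integral_finset_sum _ fun j _ => hF i j]
    _ = ∑ i : Fin N, ∑ j : Fin N,
        (if i < j then ∫ x in boxN d N, v (x i - x j) * ‖Ψ x‖^2 else 0) := by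
        congr 1; funext i; congr 1; funext j; exact (e1 i j).symm
  have hpot : ((N:ℝ) - 1)⁻¹ * C ≤ potentialEnergy d N v Ψ := by
    unfold potentialEnergy
    apply mul_le_mul_of_nonneg_left _ (le_of_lt (inv_pos.mpr hn1pos))
    exact hTbound
  have hEform : energyForm d N v Ψ = kineticEnergy d N Ψ + potentialEnergy d N v Ψ := rfl
  have halg : (N:ℝ) / 2 * vhat 0 - ((N:ℝ) - 1)⁻¹ * C
      = (N:ℝ) / (2 * ((N:ℝ) - 1)) * (v 0 - vhat 0) := by
    rw [hC]
    field_simp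
    ring
  have h1 : kineticEnergy d N Ψ ≤ (N:ℝ) / 2 * vhat 0 + μ - ((N:ℝ) - 1)⁻¹ * C := by
    rw [hEform] at henergy
    linarith
  linarith [h1, halg.le]
end
end

section
/- Let R be an associative ℝ-algebra with an involution * (star ring with ℝ-linear star), and let b, c ∈ R satisfy b·c = c·b. Let A, B be real numbers with 0 < B < A, set S = √(A² − B²) and α = (A − S)/B. Then A·(b*b + c*c) + B·(b*c* + bc) = (S/(1−α²))·((b* + α c)(b + α c*) + (c* + α b)(c + α b*)) − ((A − S)/2)·((bb* − b*b) + (cc* − c*c)). -/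
/-!
`α = (A - S) / B` is the smaller root of `B x² - 2 A x + B = 0`, and this quadratic turns the
prefactor `S / (1 - α²)` into `B / (2 α)`. Expanding the two products (with `c* b* = b* c*`,
the adjoint of `b c = c b`) writes the right-hand side in terms of `b* b + c* c`, `b* c* + b c`
and `b b* + c c*`; comparing coefficients, all three reduce to the same quadratic equation.
-/

theorem bogoliubov_expand {R : Type*} [Ring R] [Algebra ℝ R] [StarRing R]
    {b c : R} (hbc : Commute b c) (α : ℝ) :
    (star b + α • c) * (b + α • star c) + (star c + α • b) * (c + α • star b) =
      (star b * b + star c * c) + (2 * α) • (star b * star c + b * c) +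
        α ^ 2 • (b * star b + c * star c) := by
  simp only [mul_add, add_mul, smul_mul_assoc, mul_smul_comm, hbc.eq, hbc.star_star.eq]
  module

theorem smul_add_smul_eq_of_quadratic {M : Type*} [AddCommGroup M] [Module ℝ M]
    (X Y Z : M) {A B α : ℝ} (hα : α ≠ 0) (hq : B * α ^ 2 - 2 * A * α + B = 0) :
    A • X + B • Y = (B / (2 * α)) • (X + (2 * α) • Y + α ^ 2 • Z) - (B * α / 2) • (Z - X) := by
  match_scalars <;> field_simp <;> linarith

theorem statement8_general {R : Type*} [Ring R] [Algebra ℝ R] [StarRing R]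
    (b c : R) (hbc : b * c = c * b)
    (A B : ℝ) (hB : 0 < B) (hBA : B < A)
    (S α : ℝ) (hS : S = Real.sqrt (A ^ 2 - B ^ 2)) (hα : α = (A - S) / B) :
    A • (star b * b + star c * c) + B • (star b * star c + b * c) =
      (S / (1 - α ^ 2)) •
          ((star b + α • c) * (b + α • star c) + (star c + α • b) * (c + α • star b)) -
        ((A - S) / 2) • ((b * star b - star b * b) + (c * star c - star c * c)) := by
  have hdisc : 0 < A ^ 2 - B ^ 2 := by nlinarith
  have hS2 : S ^ 2 = A ^ 2 - B ^ 2 := hS ▸ Real.sq_sqrt hdisc.le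
  have hS0 : 0 < S := hS ▸ Real.sqrt_pos.mpr hdisc
  have hSA : A - S = B * α := by rw [hα]; field_simp
  have hα0 : 0 < α := hα ▸ div_pos (by nlinarith) hB
  have hq : B * α ^ 2 - 2 * A * α + B = 0 := by
    have : B * (B * α ^ 2 - 2 * A * α + B) = 0 := by
      linear_combination (A - B * α + S) * hSA + hS2
    exact (mul_eq_zero.mp this).resolve_left hB.ne'
  have hκ : S / (1 - α ^ 2) = B / (2 * α) := by
    have h1 : B * (1 - α ^ 2) = 2 * S * α := by linear_combination hq + 2 * α * hSA
    have : 1 - α ^ 2 ≠ 0 := fun h => by nlinarith [h ▸ h1]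
    rw [div_eq_div_iff this (by positivity)]
    linear_combination -h1
  rw [hκ, hSA, bogoliubov_expand hbc,
    show (b * star b - star b * b) + (c * star c - star c * c) =
      (b * star b + c * star c) - (star b * b + star c * c) by abel]
  exact smul_add_smul_eq_of_quadratic _ _ _ hα0.ne' hq

/-- The algebraic identity underlying the diagonalization of the Bogoliubov
Hamiltonian, in an associative ℝ-algebra with an ℝ-linear involution `star`.
Here `b` and `c` play the roles of the modified annihilation operators
`b_p` and `b_{-p}`. -/
theorem statement8 {R : Type*} [Ring R] [Algebra ℝ R] [StarRing R] [StarModule ℝ R]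
    (b c : R) (hbc : b * c = c * b)
    (A B : ℝ) (hB : 0 < B) (hBA : B < A)
    (S α : ℝ) (hS : S = Real.sqrt (A ^ 2 - B ^ 2)) (hα : α = (A - S) / B) :
    A • (star b * b + star c * c) + B • (star b * star c + b * c) =
      (S / (1 - α ^ 2)) •
          ((star b + α • c) * (b + α • star c) + (star c + α • b) * (c + α • star b)) -
        ((A - S) / 2) • ((b * star b - star b * b) + (c * star c - star c * c)) :=
  statement8_general b c hbc A B hB hBA S α hS hα
end

section
/- Let c : (2πℤ)^d → ℝ satisfy c(p) ≥ 0 for all p and suppose p ↦ c(p)² is summable. Then the family p ↦ |p|² + c(p) − √(|p|⁴ + 2|p|²·c(p)), indexed by p ∈ (2πℤ)^d∖{0}, is summable; moreover every summand satisfies 0 ≤ |p|² + c(p) − √(|p|⁴ + 2|p|²·c(p)) ≤ c(p)²/(2|p|²). (Consequently the Bogoliubov energy E^Bog = −(1/2)∑_{p≠0}(|p|² + c(p) − √(|p|⁴ + 2|p|²c(p))) is a well-defined real number.) -/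
/-!
Rationalising, `a + b - √(a² + 2ab) = b² / (a + b + √(a² + 2ab))`, and for `a = |p|² > 0`,
`b = c(p) ≥ 0` the denominator is at least `2|p|² ≥ 8π² > 1`. Hence every summand lies between
`0` and `c(p)²`, and summability follows by comparison.
-/

open Real

noncomputable section

lemma four_pi_sq_le_pSq {d : ℕ} {k : Fin d → ℤ} (hk : k ≠ 0) : 4 * π ^ 2 ≤ pSq d k := by
  obtain ⟨j, hj⟩ := Function.ne_iff.mp hk
  have hkj : (1 : ℝ) ≤ (k j : ℝ) ^ 2 := by exact mod_cast (one_le_sq_iff_one_le_abs _).mpr (Int.one_le_abs hj)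
  calc 4 * π ^ 2 ≤ (2 * π * (k j : ℝ)) ^ 2 := by nlinarith [sq_nonneg π]
    _ ≤ pSq d k := Finset.single_le_sum (f := fun j => (2 * π * (k j : ℝ)) ^ 2)
        (fun _ _ => sq_nonneg _) (Finset.mem_univ j)

lemma sqrt_sq_add_two_mul_le {a b : ℝ} (hab : 0 ≤ a + b) : √(a ^ 2 + 2 * a * b) ≤ a + b :=
  Real.sqrt_le_iff.mpr ⟨hab, by nlinarith [sq_nonneg b]⟩

lemma le_sqrt_sq_add_two_mul {a b : ℝ} (ha : 0 ≤ a) (hb : 0 ≤ b) : a ≤ √(a ^ 2 + 2 * a * b) :=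
  Real.le_sqrt_of_sq_le (by nlinarith)

lemma add_sub_sqrt_sq_add_two_mul_le {a b : ℝ} (ha : 0 < a) (hb : 0 ≤ b) :
    a + b - √(a ^ 2 + 2 * a * b) ≤ b ^ 2 / (2 * a) := by
  set s := √(a ^ 2 + 2 * a * b)
  have hs_sq : s ^ 2 = a ^ 2 + 2 * a * b := Real.sq_sqrt (by positivity)
  have h_conj : (a + b - s) * (a + b + s) = b ^ 2 := by linear_combination (-1 : ℝ) * hs_sq
  have h_lower : a ≤ s := le_sqrt_sq_add_two_mul ha.le hb
  have h_upper : s ≤ a + b := sqrt_sq_add_two_mul_le (by linarith)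
  rw [le_div_iff₀ (by positivity)]
  calc (a + b - s) * (2 * a) ≤ (a + b - s) * (a + b + s) :=
        mul_le_mul_of_nonneg_left (by linarith) (sub_nonneg.mpr h_upper)
    _ = b ^ 2 := h_conj

theorem statement10_general (d : ℕ) (c : (Fin d → ℤ) → ℝ)
    (hc : ∀ k, 0 ≤ c k) (hsum : Summable fun k : Fin d → ℤ => (c k) ^ 2) :
    Summable (fun k : {k : Fin d → ℤ // k ≠ 0} =>
        pSq d k.1 + c k.1 - Real.sqrt ((pSq d k.1) ^ 2 + 2 * pSq d k.1 * c k.1)) ∧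
      ∀ k : {k : Fin d → ℤ // k ≠ 0},
        0 ≤ pSq d k.1 + c k.1 - Real.sqrt ((pSq d k.1) ^ 2 + 2 * pSq d k.1 * c k.1) ∧
        pSq d k.1 + c k.1 - Real.sqrt ((pSq d k.1) ^ 2 + 2 * pSq d k.1 * c k.1) ≤
          (c k.1) ^ 2 / (2 * pSq d k.1) := by
  have hpos : ∀ k : {k : Fin d → ℤ // k ≠ 0}, 0 < pSq d k.1 := fun k =>
    (by positivity : (0 : ℝ) < 4 * π ^ 2).trans_le (four_pi_sq_le_pSq k.2)
  have bounds : ∀ k : {k : Fin d → ℤ // k ≠ 0},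
      0 ≤ pSq d k.1 + c k.1 - Real.sqrt ((pSq d k.1) ^ 2 + 2 * pSq d k.1 * c k.1) ∧
      pSq d k.1 + c k.1 - Real.sqrt ((pSq d k.1) ^ 2 + 2 * pSq d k.1 * c k.1) ≤
        (c k.1) ^ 2 / (2 * pSq d k.1) := fun k =>
    ⟨sub_nonneg.mpr (sqrt_sq_add_two_mul_le (add_nonneg (hpos k).le (hc k.1))),
      add_sub_sqrt_sq_add_two_mul_le (hpos k) (hc k.1)⟩
  have one_le_two_pSq : ∀ k : {k : Fin d → ℤ // k ≠ 0}, 1 ≤ 2 * pSq d k.1 := fun k => by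
    nlinarith [four_pi_sq_le_pSq k.2, pi_gt_three]
  refine ⟨(hsum.subtype _).of_nonneg_of_le (fun k => (bounds k).1) fun k => ?_, bounds⟩
  exact (bounds k).2.trans (div_le_self (sq_nonneg _) (one_le_two_pSq k))

theorem statement10 (d : ℕ) (hd : 1 ≤ d) (c : (Fin d → ℤ) → ℝ)
    (hc : ∀ k, 0 ≤ c k) (hsum : Summable fun k : Fin d → ℤ => (c k) ^ 2) :
    Summable (fun k : {k : Fin d → ℤ // k ≠ 0} =>
        pSq d k.1 + c k.1 - Real.sqrt ((pSq d k.1) ^ 2 + 2 * pSq d k.1 * c k.1)) ∧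
      ∀ k : {k : Fin d → ℤ // k ≠ 0},
        0 ≤ pSq d k.1 + c k.1 - Real.sqrt ((pSq d k.1) ^ 2 + 2 * pSq d k.1 * c k.1) ∧
        pSq d k.1 + c k.1 - Real.sqrt ((pSq d k.1) ^ 2 + 2 * pSq d k.1 * c k.1) ≤
          (c k.1) ^ 2 / (2 * pSq d k.1) :=
  statement10_general d c hc hsum
end
end

section
/- Let c : (2πℤ)^d → ℝ be nonnegative and bounded with p ↦ c(p)² summable. For p ∈ (2πℤ)^d∖{0}, set A_p = |p|² + c(p), B_p = c(p), α_p = (A_p − √(A_p² − B_p²))/B_p if c(p) > 0 and α_p = 0 otherwise, and let β_p = (1/2)·artanh(α_p). Then the family p ↦ |p|⁴·β_p², indexed by p ∈ (2πℤ)^d∖{0}, is summable; in particular p ↦ β_p² is summable. -/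
open Real

noncomputable section

/-- The inverse hyperbolic tangent, `artanh x = (1/2)·log((1+x)/(1-x))`. -/
def artanh (x : ℝ) : ℝ := (1 / 2) * Real.log ((1 + x) / (1 - x))

/-- The Bogoliubov coefficient `α_p = (A_p - √(A_p² - B_p²))/B_p` with
`A_p = |p|² + c(p)`, `B_p = c(p)`, and the convention `α_p = 0` if `c(p) = 0`. -/
def alphaCoef (d : ℕ) (c : (Fin d → ℤ) → ℝ) (k : Fin d → ℤ) : ℝ :=
  if 0 < c k then
    (pSq d k + c k - Real.sqrt ((pSq d k + c k) ^ 2 - (c k) ^ 2)) / c k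
  else 0

/-- `β_p = (1/2)·artanh(α_p)`. -/
def betaCoef (d : ℕ) (c : (Fin d → ℤ) → ℝ) (k : Fin d → ℤ) : ℝ :=
  (1 / 2) * _root_.artanh (alphaCoef d c k)

/-!
With `s = √(A² - B²)` one has `(A - s)(A + s) = B²`, hence `α_p ≤ c(p) / (|p|² + c(p))` and
`α_p / (1 - α_p) ≤ c(p) / |p|²`. Since `log y ≤ y - 1`, `artanh x ≤ x / (1 - x)` on `(-1, 1)`, so
`0 ≤ |p|² β_p ≤ c(p) / 2`: the family `|p|⁴ β_p²` is dominated by `c(p)² / 4`. Off the origin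
`|p|² ≥ 4π² ≥ 1`, so `β_p² ≤ |p|⁴ β_p²`.
-/

lemma artanh_eq_real_artanh {x : ℝ} (hx : x ∈ Set.Icc (-1) 1) :
    _root_.artanh x = Real.artanh x :=
  (Real.artanh_eq_half_log hx).symm

lemma artanh_le_div_one_sub {x : ℝ} (h0 : -1 < x) (h1 : x < 1) :
    _root_.artanh x ≤ x / (1 - x) := by
  have h1x : 0 < 1 - x := by linarith
  have hlog := Real.log_le_sub_one_of_pos (div_pos (by linarith : 0 < 1 + x) h1x)
  calc _root_.artanh x ≤ 1 / 2 * ((1 + x) / (1 - x) - 1) := by unfold _root_.artanh; linarith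
    _ = x / (1 - x) := by field_simp; ring

lemma sub_sqrt_sq_sub_sq_div_nonneg {A B : ℝ} (hB : 0 < B) (hBA : B ≤ A) :
    0 ≤ (A - √(A ^ 2 - B ^ 2)) / B := by
  have : √(A ^ 2 - B ^ 2) ≤ A := (Real.sqrt_le_left (by linarith)).mpr (by nlinarith)
  exact div_nonneg (by linarith) hB.le

lemma sub_sqrt_sq_sub_sq_div_le {A B : ℝ} (hB : 0 < B) (hBA : B ≤ A) :
    (A - √(A ^ 2 - B ^ 2)) / B ≤ B / A := by
  have hs0 : 0 ≤ √(A ^ 2 - B ^ 2) := Real.sqrt_nonneg _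
  have hss : √(A ^ 2 - B ^ 2) ^ 2 = A ^ 2 - B ^ 2 := Real.sq_sqrt (by nlinarith)
  rw [div_le_div_iff₀ hB (hB.trans_le hBA)]
  nlinarith

lemma div_one_sub_le_div_of_le_div_add {x P B : ℝ} (hP : 0 < P) (hB : 0 ≤ B)
    (hx : x ≤ B / (P + B)) : x / (1 - x) ≤ B / P := by
  have hPB : 0 < P + B := by linarith
  have h1x : P / (P + B) ≤ 1 - x := by
    have : P / (P + B) = 1 - B / (P + B) := by field_simp; ring
    linarith
  calc x / (1 - x) ≤ (B / (P + B)) / (P / (P + B)) :=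
        div_le_div₀ (by positivity) hx (by positivity) h1x
    _ = B / P := by field_simp

section

variable {d : ℕ} {c : (Fin d → ℤ) → ℝ} {k : Fin d → ℤ}

lemma pSq_nonneg : 0 ≤ pSq d k :=
  Finset.sum_nonneg fun _ _ => sq_nonneg _

lemma one_le_pSq (hk : k ≠ 0) : 1 ≤ pSq d k := by
  obtain ⟨j, hj⟩ := Function.ne_iff.mp hk
  have hkj : (1 : ℝ) ≤ (k j : ℝ) ^ 2 := by
    exact_mod_cast (one_le_sq_iff_one_le_abs _).mpr (Int.one_le_abs hj)
  have hπ : (1 : ℝ) ≤ (2 * π) ^ 2 := by nlinarith [Real.pi_gt_three]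
  calc (1 : ℝ) ≤ (2 * π) ^ 2 * (k j : ℝ) ^ 2 := one_le_mul_of_one_le_of_one_le hπ hkj
    _ = (2 * π * (k j : ℝ)) ^ 2 := by ring
    _ ≤ pSq d k := Finset.single_le_sum (f := fun i => (2 * π * (k i : ℝ)) ^ 2)
        (fun _ _ => sq_nonneg _) (Finset.mem_univ j)

lemma alphaCoef_mem_Icc (hc : 0 < c k) :
    alphaCoef d c k ∈ Set.Icc 0 (c k / (pSq d k + c k)) := by
  have hBA : c k ≤ pSq d k + c k := le_add_of_nonneg_left pSq_nonneg
  rw [alphaCoef, if_pos hc]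
  exact ⟨sub_sqrt_sq_sub_sq_div_nonneg hc hBA, sub_sqrt_sq_sub_sq_div_le hc hBA⟩

lemma betaCoef_eq_zero_of_nonpos (hc : c k ≤ 0) : betaCoef d c k = 0 := by
  simp [betaCoef, alphaCoef, hc.not_gt, _root_.artanh]

lemma betaCoef_mem_Icc (hk : 0 < pSq d k) (hc : 0 < c k) :
    betaCoef d c k ∈ Set.Icc 0 (c k / pSq d k / 2) := by
  obtain ⟨hα0, hαle⟩ := alphaCoef_mem_Icc hc
  have hα1 : alphaCoef d c k < 1 :=
    hαle.trans_lt ((div_lt_one (by linarith)).mpr (by linarith))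
  have hnonneg : 0 ≤ _root_.artanh (alphaCoef d c k) := by
    rw [artanh_eq_real_artanh ⟨by linarith, hα1.le⟩]
    exact Real.artanh_nonneg hα0
  have hle : _root_.artanh (alphaCoef d c k) ≤ c k / pSq d k :=
    (artanh_le_div_one_sub (by linarith) hα1).trans
      (div_one_sub_le_div_of_le_div_add hk hc.le hαle)
  rw [betaCoef]
  constructor <;> linarith

lemma sq_pSq_mul_betaCoef_le (hk : 0 < pSq d k) :
    (pSq d k * betaCoef d c k) ^ 2 ≤ c k ^ 2 / 4 := by
  rcases le_or_gt (c k) 0 with hc | hc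
  · rw [betaCoef_eq_zero_of_nonpos hc, mul_zero, sq, zero_mul]
    positivity
  obtain ⟨hβ0, hβle⟩ := betaCoef_mem_Icc hk hc
  have : pSq d k * betaCoef d c k ≤ c k / 2 := by
    rw [div_div, le_div_iff₀ (by positivity)] at hβle
    linarith
  calc (pSq d k * betaCoef d c k) ^ 2 ≤ (c k / 2) ^ 2 := pow_le_pow_left₀ (by positivity) this 2
    _ = c k ^ 2 / 4 := by ring

end

theorem statement11_general (d : ℕ) (c : (Fin d → ℤ) → ℝ)
    (hsum : Summable fun k : Fin d → ℤ => (c k) ^ 2) :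
    Summable (fun k : {k : Fin d → ℤ // k ≠ 0} =>
        (pSq d k.1) ^ 2 * (betaCoef d c k.1) ^ 2) ∧
      Summable (fun k : {k : Fin d → ℤ // k ≠ 0} => (betaCoef d c k.1) ^ 2) := by
  have hbound (k : {k : Fin d → ℤ // k ≠ 0}) :
      (pSq d k.1) ^ 2 * (betaCoef d c k.1) ^ 2 ≤ (c k.1) ^ 2 / 4 := by
    rw [← mul_pow]
    exact sq_pSq_mul_betaCoef_le (one_pos.trans_le (one_le_pSq k.2))
  have hweighted : Summable (fun k : {k : Fin d → ℤ // k ≠ 0} =>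
      (pSq d k.1) ^ 2 * (betaCoef d c k.1) ^ 2) :=
    .of_nonneg_of_le (fun _ => by positivity) hbound ((hsum.subtype _).div_const 4)
  refine ⟨hweighted, hweighted.of_nonneg_of_le (fun _ => sq_nonneg _) fun k => ?_⟩
  exact le_mul_of_one_le_left (sq_nonneg _) (one_le_pow₀ (one_le_pSq k.2))

theorem statement11 (d : ℕ) (hd : 1 ≤ d) (c : (Fin d → ℤ) → ℝ)
    (hc : ∀ k, 0 ≤ c k) (hbdd : ∃ M : ℝ, ∀ k, c k ≤ M)
    (hsum : Summable fun k : Fin d → ℤ => (c k) ^ 2) :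
    Summable (fun k : {k : Fin d → ℤ // k ≠ 0} =>
        (pSq d k.1) ^ 2 * (betaCoef d c k.1) ^ 2) ∧
      Summable (fun k : {k : Fin d → ℤ // k ≠ 0} => (betaCoef d c k.1) ^ 2) :=
  statement11_general d c hsum
end
end

section
/- Let H be a complex Hilbert space, let A and X be bounded linear operators on H with A self-adjoint and positive (⟨φ, Aφ⟩ ≥ 0 for all φ) and X skew-adjoint (X* = −X), and let C ≥ 0. Assume that ⟨φ, (AX − XA)φ⟩ ≤ C·⟨φ, Aφ⟩ for all φ ∈ H (note AX − XA is self-adjoint). Then for every t ≥ 0 and every ψ ∈ H, ⟨exp(tX)ψ, A·exp(tX)ψ⟩ ≤ e^{Ct}·⟨ψ, Aψ⟩, where exp denotes the exponential of a bounded operator. -/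
/-!
Along the flow `u s = exp (s • X) ψ` we have `u' = X u`, and skew-adjointness of `X` turns the
derivative of `f s = re ⟪u s, A (u s)⟫` into `re ⟪u s, (A X - X A) (u s)⟫ ≤ C f s`.
Grönwall's inequality then gives `f t ≤ exp (C t) f 0`.
-/

open scoped InnerProductSpace

theorem le_exp_mul_mul_of_hasDerivAt_le_mul {f f' : ℝ → ℝ} {C t : ℝ}
    (hf : ∀ s, HasDerivAt f (f' s) s) (hle : ∀ s, f' s ≤ C * f s) (ht : 0 ≤ t) :
    f t ≤ Real.exp (C * t) * f 0 := by
  have := le_gronwallBound_of_liminf_deriv_right_le (δ := f 0) (ε := 0)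
    (fun x _ => (hf x).continuousAt.continuousWithinAt)
    (fun x _ _ hr => (hf x).hasDerivWithinAt.liminf_right_slope_le hr) le_rfl
    (fun x _ => (add_zero (C * f x)).symm ▸ hle x) t ⟨ht, le_rfl⟩
  rwa [gronwallBound_ε0, sub_zero, mul_comm] at this

theorem hasDerivAt_exp_smul_apply {E : Type*} [NormedAddCommGroup E] [NormedSpace ℂ E]
    [CompleteSpace E] (X : E →L[ℂ] E) (ψ : E) (s : ℝ) :
    HasDerivAt (fun r : ℝ => NormedSpace.exp (r • X) ψ) (X (NormedSpace.exp (s • X) ψ)) s :=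
  ((ContinuousLinearMap.apply ℂ E ψ).restrictScalars ℝ).hasFDerivAt.comp_hasDerivAt s
    (hasDerivAt_exp_smul_const' (𝕂 := ℝ) X s)

section SkewAdjoint

variable {H : Type*} [NormedAddCommGroup H] [InnerProductSpace ℂ H] [CompleteSpace H]
  {A X : H →L[ℂ] H}

theorem inner_apply_add_inner_apply_eq_inner_commutator (hX : ContinuousLinearMap.adjoint X = -X)
    (φ : H) : ⟪φ, A (X φ)⟫_ℂ + ⟪X φ, A φ⟫_ℂ = ⟪φ, (A * X - X * A) φ⟫_ℂ := by
  rw [← ContinuousLinearMap.adjoint_inner_right, hX, sub_apply, inner_sub_right, neg_apply,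
    inner_neg_right]
  exact (sub_eq_add_neg _ _).symm

theorem hasDerivAt_re_inner_apply_of_hasDerivAt (hX : ContinuousLinearMap.adjoint X = -X)
    {u : ℝ → H} {s : ℝ} (hu : HasDerivAt u (X (u s)) s) :
    HasDerivAt (fun r => (⟪u r, A (u r)⟫_ℂ).re) (⟪u s, (A * X - X * A) (u s)⟫_ℂ).re s := by
  have hAu : HasDerivAt (fun r => A (u r)) (A (X (u s))) s :=
    (A.restrictScalars ℝ).hasFDerivAt.comp_hasDerivAt s hu
  rw [← inner_apply_add_inner_apply_eq_inner_commutator hX]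
  exact Complex.reCLM.hasFDerivAt.comp_hasDerivAt s (hu.inner ℂ hAu)

end SkewAdjoint

theorem statement13_general {H : Type*} [NormedAddCommGroup H] [InnerProductSpace ℂ H]
    [CompleteSpace H] (A X : H →L[ℂ] H)
    (hX : ContinuousLinearMap.adjoint X = -X) (C : ℝ)
    (hcomm : ∀ φ : H, (⟪φ, (A * X - X * A) φ⟫_ℂ).re ≤ C * (⟪φ, A φ⟫_ℂ).re) :
    ∀ t : ℝ, 0 ≤ t → ∀ ψ : H,
      (⟪NormedSpace.exp (t • X) ψ, A (NormedSpace.exp (t • X) ψ)⟫_ℂ).re ≤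
        Real.exp (C * t) * (⟪ψ, A ψ⟫_ℂ).re := by
  intro t ht ψ
  have hflow := hasDerivAt_exp_smul_apply X ψ
  have bound := le_exp_mul_mul_of_hasDerivAt_le_mul
    (fun s => hasDerivAt_re_inner_apply_of_hasDerivAt (A := A) hX (hflow s)) (fun _ => hcomm _) ht
  simpa only [zero_smul, NormedSpace.exp_zero, one_apply_eq_self] using bound

/-- Gronwall-type bound: if `A ≥ 0` is a bounded self-adjoint operator, `X` is
bounded skew-adjoint, and the commutator `AX - XA` is bounded by `C·A` in the
sense of quadratic forms, then `⟨e^{tX}ψ, A e^{tX}ψ⟩ ≤ e^{Ct}⟨ψ, Aψ⟩` for `t ≥ 0`. -/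
theorem statement13 {H : Type*} [NormedAddCommGroup H] [InnerProductSpace ℂ H]
    [CompleteSpace H] (A X : H →L[ℂ] H) (hA : IsSelfAdjoint A)
    (hApos : ∀ φ : H, 0 ≤ (⟪φ, A φ⟫_ℂ).re)
    (hX : ContinuousLinearMap.adjoint X = -X) (C : ℝ) (hC : 0 ≤ C)
    (hcomm : ∀ φ : H, (⟪φ, (A * X - X * A) φ⟫_ℂ).re ≤ C * (⟪φ, A φ⟫_ℂ).re) :
    ∀ t : ℝ, 0 ≤ t → ∀ ψ : H,
      (⟪NormedSpace.exp (t • X) ψ, A (NormedSpace.exp (t • X) ψ)⟫_ℂ).re ≤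
        Real.exp (C * t) * (⟪ψ, A ψ⟫_ℂ).re :=
  statement13_general A X hX C hcomm
end

section
/- Let H be a complex Hilbert space, let v be a bounded self-adjoint operator on H with ⟨φ, vφ⟩ ≥ 0 for all φ, and let E₀, E₁, E₂ be orthogonal projections on H with E₀ + E₁ + E₂ = 1 and E₀vE₁ = 0. Then for every ε > 0 the operator v − E₀vE₀ − E₀vE₂ − E₂vE₀ − (1−ε)·E₁vE₁ + ε^{−1}·E₂vE₂ is positive, i.e. v ≥ E₀vE₀ + E₀vE₂ + E₂vE₀ + (1−ε)·E₁vE₁ − ε^{−1}·E₂vE₂ in the sense of quadratic forms. -/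
/-!
Write `a = E₀φ`, `b = E₁φ`, `c = E₂φ`, so `φ = a + b + c`. Since `E₀vE₁ = 0` and `v` is
self-adjoint, the cross terms between `a` and `b` in `⟪φ, vφ⟫` vanish, and the form of the
operator at `φ` reduces to `ε⟪b, vb⟫ + 2 Re⟪b, vc⟫ + (1 + ε⁻¹)⟪c, vc⟫`, which equals
`ε⁻¹⟪εb + c, v(εb + c)⟫ + ⟪c, vc⟫ ≥ 0`.
-/

open scoped InnerProductSpace

section

variable {𝕜 E : Type*} [RCLike 𝕜] [NormedAddCommGroup E] [InnerProductSpace 𝕜 E]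

theorem re_inner_cross_nonneg_of_accretive {v : E →ₗ[𝕜] E}
    (hv : ∀ x, 0 ≤ RCLike.re ⟪x, v x⟫_𝕜) {ε : ℝ} (hε : 0 < ε) (b c : E) :
    0 ≤ ε * RCLike.re ⟪b, v b⟫_𝕜 + RCLike.re ⟪b, v c⟫_𝕜 + RCLike.re ⟪c, v b⟫_𝕜
      + ε⁻¹ * RCLike.re ⟪c, v c⟫_𝕜 := by
  have h := hv ((ε : 𝕜) • b + c)
  simp only [map_add, map_smul, inner_add_left, inner_add_right, inner_smul_left,
    inner_smul_right, RCLike.conj_ofReal, RCLike.re_ofReal_mul] at h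
  calc 0 ≤ ε⁻¹ * (ε * (ε * RCLike.re ⟪b, v b⟫_𝕜 + RCLike.re ⟪c, v b⟫_𝕜)
        + (ε * RCLike.re ⟪b, v c⟫_𝕜 + RCLike.re ⟪c, v c⟫_𝕜)) := by positivity
    _ = _ := by field_simp; ring

variable [CompleteSpace E]

theorem IsSelfAdjoint.inner_mul_mul_apply {P : E →L[𝕜] E} (hP : IsSelfAdjoint P)
    (v Q : E →L[𝕜] E) (x y : E) : ⟪x, (P * v * Q) y⟫_𝕜 = ⟪P x, v (Q y)⟫_𝕜 :=
  (hP.isSymmetric x _).symm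

theorem inner_apply_eq_zero_of_mul_mul_eq_zero {P Q v : E →L[𝕜] E} (hP : IsSelfAdjoint P)
    (h : P * v * Q = 0) (x : E) : ⟪P x, v (Q x)⟫_𝕜 = 0 := by
  rw [← hP.inner_mul_mul_apply, h, zero_apply, inner_zero_right]

theorem inner_apply_swap_eq_zero_of_mul_mul_eq_zero {P Q v : E →L[𝕜] E} (hP : IsSelfAdjoint P)
    (hv : IsSelfAdjoint v) (h : P * v * Q = 0) (x : E) : ⟪Q x, v (P x)⟫_𝕜 = 0 :=
  calc ⟪Q x, v (P x)⟫_𝕜 = ⟪v (Q x), P x⟫_𝕜 := (hv.isSymmetric _ _).symm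
    _ = 0 := by rw [← inner_conj_symm, inner_apply_eq_zero_of_mul_mul_eq_zero hP h, map_zero]

end

open ContinuousLinearMap in
/-- Cauchy–Schwarz decomposition (lower bound) for a positive bounded operator `v`
relative to a decomposition `1 = E₀ + E₁ + E₂` into orthogonal projections with
`E₀vE₁ = 0`: for every `ε > 0`,
`v ≥ E₀vE₀ + E₀vE₂ + E₂vE₀ + (1-ε)E₁vE₁ - ε⁻¹E₂vE₂`. -/
theorem statement14 {H : Type*} [NormedAddCommGroup H] [InnerProductSpace ℂ H]
    [CompleteSpace H] (v E₀ E₁ E₂ : H →L[ℂ] H)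
    (hv : IsSelfAdjoint v) (hvpos : ∀ φ : H, 0 ≤ (⟪φ, v φ⟫_ℂ).re)
    (hE₀ : IsSelfAdjoint E₀ ∧ E₀ * E₀ = E₀)
    (hE₁ : IsSelfAdjoint E₁ ∧ E₁ * E₁ = E₁)
    (hE₂ : IsSelfAdjoint E₂ ∧ E₂ * E₂ = E₂)
    (hsum : E₀ + E₁ + E₂ = 1) (horth : E₀ * v * E₁ = 0) :
    ∀ ε : ℝ, 0 < ε → ∀ φ : H,
      0 ≤ (⟪φ, (v - E₀ * v * E₀ - E₀ * v * E₂ - E₂ * v * E₀ -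
        ((1 - ε : ℝ) : ℂ) • (E₁ * v * E₁) + ((ε⁻¹ : ℝ) : ℂ) • (E₂ * v * E₂)) φ⟫_ℂ).re := by
  intro ε hε φ
  have hφ : φ = E₀ φ + E₁ φ + E₂ φ := by
    rw [← add_apply, ← add_apply, hsum, one_apply_eq_self]
  have h01 := inner_apply_eq_zero_of_mul_mul_eq_zero hE₀.1 horth φ
  have h10 := inner_apply_swap_eq_zero_of_mul_mul_eq_zero hE₀.1 hv horth φ
  have hexpand := congrArg (fun x ↦ ⟪x, v x⟫_ℂ) hφ
  simp only [map_add, inner_add_left, inner_add_right, h01, h10] at hexpand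
  have hcross := re_inner_cross_nonneg_of_accretive (𝕜 := ℂ) (v := v) hvpos hε (E₁ φ) (E₂ φ)
  simp only [coe_coe, RCLike.re_to_complex] at hcross
  simp only [sub_apply, add_apply, smul_apply, inner_sub_right, inner_add_right,
    inner_smul_right, hE₀.1.inner_mul_mul_apply, hE₁.1.inner_mul_mul_apply,
    hE₂.1.inner_mul_mul_apply, hexpand, Complex.sub_re, Complex.add_re,
    Complex.re_ofReal_mul, Complex.zero_re]
  linarith [hvpos (E₂ φ)]
end

section
/- Let H be a complex Hilbert space, let v be a bounded self-adjoint operator on H with ⟨φ, vφ⟩ ≥ 0 for all φ, and let E₀, E₁, E₂ be orthogonal projections on H with E₀ + E₁ + E₂ = 1 and E₀vE₁ = 0. Then for every ε > 0 the operator E₀vE₀ + E₀vE₂ + E₂vE₀ + (1+ε)·E₁vE₁ + (1+ε^{−1})·E₂vE₂ − v is positive, i.e. v ≤ E₀vE₀ + E₀vE₂ + E₂vE₀ + (1+ε)·E₁vE₁ + (1+ε^{−1})·E₂vE₂ in the sense of quadratic forms. -/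
open scoped InnerProductSpace

/-! The cross terms `E₀vE₁` and `E₁vE₀ = (E₀vE₁)*` vanish, so `E₀vE₀ + E₀vE₂ + E₂vE₀ + (1+ε)E₁vE₁ +
(1+ε⁻¹)E₂vE₂ - v = εE₁vE₁ + ε⁻¹E₂vE₂ - E₁vE₂ - E₂vE₁`, and the quadratic form of the right-hand
side is `ε⁻¹ ⟪εψ₁ - ψ₂, v(εψ₁ - ψ₂)⟫ ≥ 0` with `ψᵢ = Eᵢφ`. -/

theorem sandwich_sub_eq_of_mul_mul_eq_zero {R A : Type*} [Semiring R] [Ring A] [Module R A]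
    (e₀ e₁ e₂ v : A) (hsum : e₀ + e₁ + e₂ = 1) (h01 : e₀ * v * e₁ = 0)
    (h10 : e₁ * v * e₀ = 0) (a b : R) :
    e₀ * v * e₀ + e₀ * v * e₂ + e₂ * v * e₀ + (1 + a) • (e₁ * v * e₁) +
        (1 + b) • (e₂ * v * e₂) - v =
      a • (e₁ * v * e₁) + b • (e₂ * v * e₂) - (e₁ * v * e₂ + e₂ * v * e₁) := by
  calc _ = e₀ * v * e₀ + e₀ * v * e₂ + e₂ * v * e₀ + (1 + a) • (e₁ * v * e₁) +
        (1 + b) • (e₂ * v * e₂) - (e₀ + e₁ + e₂) * v * (e₀ + e₁ + e₂) := by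
          rw [hsum, one_mul, mul_one]
    _ = _ := by
      simp only [add_mul, mul_add, add_smul, one_smul, h01, h10]
      abel

theorem re_inner_add_re_inner_le {𝕜 E : Type*} [RCLike 𝕜] [NormedAddCommGroup E]
    [InnerProductSpace 𝕜 E] (v : E →ₗ[𝕜] E) (hv : ∀ φ, 0 ≤ RCLike.re ⟪φ, v φ⟫_𝕜) (x y : E)
    {ε : ℝ} (hε : 0 < ε) :
    RCLike.re ⟪x, v y⟫_𝕜 + RCLike.re ⟪y, v x⟫_𝕜 ≤
      ε * RCLike.re ⟪x, v x⟫_𝕜 + ε⁻¹ * RCLike.re ⟪y, v y⟫_𝕜 := by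
  have h := hv ((ε : 𝕜) • x - y)
  simp only [map_sub, map_smul, inner_sub_left, inner_sub_right, inner_smul_left,
    inner_smul_right, RCLike.conj_ofReal, RCLike.re_ofReal_mul] at h
  rw [← sub_nonneg]
  refine nonneg_of_mul_nonneg_right (le_of_le_of_eq h ?_) hε
  field_simp
  ring

/-- Cauchy–Schwarz decomposition (upper bound) for a positive bounded operator `v`
relative to a decomposition `1 = E₀ + E₁ + E₂` into orthogonal projections with
`E₀vE₁ = 0`: for every `ε > 0`,
`v ≤ E₀vE₀ + E₀vE₂ + E₂vE₀ + (1+ε)E₁vE₁ + (1+ε⁻¹)E₂vE₂`. -/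
theorem statement15 {H : Type*} [NormedAddCommGroup H] [InnerProductSpace ℂ H]
    [CompleteSpace H] (v E₀ E₁ E₂ : H →L[ℂ] H)
    (hv : IsSelfAdjoint v) (hvpos : ∀ φ : H, 0 ≤ (⟪φ, v φ⟫_ℂ).re)
    (hE₀ : IsSelfAdjoint E₀ ∧ E₀ * E₀ = E₀)
    (hE₁ : IsSelfAdjoint E₁ ∧ E₁ * E₁ = E₁)
    (hE₂ : IsSelfAdjoint E₂ ∧ E₂ * E₂ = E₂)
    (hsum : E₀ + E₁ + E₂ = 1) (horth : E₀ * v * E₁ = 0) :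
    ∀ ε : ℝ, 0 < ε → ∀ φ : H,
      0 ≤ (⟪φ, (E₀ * v * E₀ + E₀ * v * E₂ + E₂ * v * E₀ +
        ((1 + ε : ℝ) : ℂ) • (E₁ * v * E₁) + ((1 + ε⁻¹ : ℝ) : ℂ) • (E₂ * v * E₂) -
          v) φ⟫_ℂ).re := by
  intro ε hε φ
  have h10 : E₁ * v * E₀ = 0 := by
    simpa [mul_assoc, hE₀.1.star_eq, hE₁.1.star_eq, hv.star_eq] using congrArg star horth
  have hform : ∀ {P : H →L[ℂ] H}, IsSelfAdjoint P → ∀ Q : H →L[ℂ] H,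
      ⟪φ, (P * v * Q) φ⟫_ℂ = ⟪P φ, v (Q φ)⟫_ℂ :=
    fun hP _ => (hP.isSymmetric φ _).symm
  simp only [Complex.ofReal_add, Complex.ofReal_one]
  rw [sandwich_sub_eq_of_mul_mul_eq_zero E₀ E₁ E₂ v hsum horth h10]
  simp only [sub_apply, add_apply, smul_apply, inner_sub_right, inner_add_right, inner_smul_right,
    hform hE₁.1, hform hE₂.1, Complex.sub_re, Complex.add_re, Complex.re_ofReal_mul]
  have hcross := re_inner_add_re_inner_le (v : H →ₗ[ℂ] H) hvpos (E₁ φ) (E₂ φ) hε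
  simp only [ContinuousLinearMap.coe_coe, RCLike.re_to_complex] at hcross
  linarith
end
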